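/- arXiv:1612.05641 — 2 statements merged into one kernel-verified Lean document; each statement's English description precedes it below -/
import Mathlib

section
/- Doubly-laced quantum exponential relation for q²-commuting elements (first identity of eq. (gb2) of the paper): if u, v ∈ A satisfy u·v = q²·v·u, then Ψ_{q_s}^{(1)}(u + v) = Ψ_{q_s}^{(1)}(u) · Ψ_q^{(2)}(q⁻¹·u·v) · Ψ_{q_s}^{(1)}(v) in A[[T]]. -/
/-!
Both sides have constant term `1` and satisfy the `q_s`-difference equation
`F(T) = (1 + q_s (u + v) T) · F(q_s² T)`, whose solution is unique because `q_s` is not a root of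
unity. For the left side this is the recursion of the coefficients of `Ψ`. For the right side it
follows from the difference equations of the three factors, together with the commutation rules
`Ψ(x)(T) · y = y · Ψ(x)(c T)` whenever `x y = c^m y x`: the term `v T · Ψ(u)(q_s² T)` that arises
when `v` is moved to the right splits as `Ψ(u) · (v T + q_s w T²)`, with `w = q⁻¹ u v`, and the
`w T²` part is exactly what the difference equation of the middle factor `Ψ_q⁽²⁾(w)` absorbs.
-/

/-- The formal quantum dilogarithm series
`Ψ_p⁽ᵐ⁾(a) = Σ_{n≥0} (p^{n²} / ∏_{k=1}^{n}(1 − p^{2k})) aⁿ T^{mn}`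
in the formal power series ring `A[[T]]`. -/
noncomputable def Psi {K : Type*} [Field K] (A : Type*) [Ring A] [Algebra K A]
    (p : K) (m : ℕ) (a : A) : PowerSeries A :=
  PowerSeries.mk fun n =>
    if m ∣ n then
      (p ^ ((n / m) ^ 2) / ∏ k ∈ Finset.Icc 1 (n / m), (1 - p ^ (2 * k))) • a ^ (n / m)
    else 0

open PowerSeries

namespace PowerSeries

lemma mul_X_mul {A : Type*} [Ring A] (f g : A⟦X⟧) : f * (X * g) = X * (f * g) :=
  (commute_X f).left_comm g

variable {K A : Type*} [Field K] [Ring A] [Algebra K A]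

lemma C_smul (r : K) (a : A) : C (r • a) = r • C a := by
  ext n; simp [coeff_C]

/-- The substitution `T ↦ c T`; `PowerSeries.rescale` needs commutative coefficients. -/
noncomputable def scale (c : K) : A⟦X⟧ →+* A⟦X⟧ where
  toFun f := mk fun n => c ^ n • coeff n f
  map_one' := by
    ext n
    rcases n with _ | n <;> simp [coeff_one]
  map_mul' f g := by
    ext n
    simp only [coeff_mk, coeff_mul, Finset.smul_sum]
    refine Finset.sum_congr rfl fun ij hij => ?_
    rw [smul_mul_smul_comm, ← pow_add, Finset.HasAntidiagonal.mem_antidiagonal.mp hij]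
  map_zero' := by ext; simp
  map_add' f g := by ext; simp

@[simp] lemma coeff_scale (c : K) (f : A⟦X⟧) (n : ℕ) : coeff n (scale c f) = c ^ n • coeff n f :=
  coeff_mk (R := A) n fun n => c ^ n • coeff n f

lemma scale_scale (c d : K) (f : A⟦X⟧) : scale c (scale d f) = scale (c * d) f := by
  ext n; simp [mul_pow, mul_smul]

@[simp] lemma scale_C (c : K) (a : A) : scale c (C a) = C a := by
  ext n; rcases n with _ | n <;> simp [coeff_C]

@[simp] lemma scale_X (c : K) : scale c (X : A⟦X⟧) = c • X := by
  ext n; rcases n with _ | _ | n <;> simp [coeff_X]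

lemma scale_smul (c r : K) (f : A⟦X⟧) : scale c (r • f) = r • scale c f := by
  ext n; simp [smul_comm r]

end PowerSeries

section

variable {K A : Type*} [Field K] [Ring A] [Algebra K A]

lemma pow_mul_eq_smul {x y : A} {r : K} (h : x * y = r • (y * x)) (n : ℕ) :
    x ^ n * y = r ^ n • (y * x ^ n) := by
  induction n with
  | zero => simp
  | succ n ih =>
    rw [pow_succ, mul_assoc, h, mul_smul_comm, ← mul_assoc, ih, smul_mul_assoc, smul_smul,
      ← pow_succ', mul_assoc, ← pow_succ]

noncomputable def psiCoeff (p : K) (n : ℕ) : K :=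
  p ^ (n ^ 2) / ∏ k ∈ Finset.Icc 1 n, (1 - p ^ (2 * k))

lemma psiCoeff_succ {p : K} (n : ℕ) (hp : p ^ (2 * (n + 1)) ≠ 1) :
    psiCoeff p (n + 1) =
      p ^ (2 * (n + 1)) * psiCoeff p (n + 1) + p ^ (2 * n + 1) * psiCoeff p n := by
  unfold psiCoeff
  rw [Finset.prod_Icc_succ_top (by omega)]
  rcases eq_or_ne (∏ k ∈ Finset.Icc 1 n, (1 - p ^ (2 * k))) 0 with h0 | h0
  · simp [h0]
  · field_simp
    ring

lemma coeff_Psi (p : K) (m : ℕ) (x : A) (k : ℕ) :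
    coeff k (Psi A p m x) = if m ∣ k then psiCoeff p (k / m) • x ^ (k / m) else 0 :=
  coeff_mk _ _

lemma constantCoeff_Psi (p : K) (m : ℕ) (x : A) : constantCoeff (Psi A p m x) = 1 := by
  simp [← coeff_zero_eq_constantCoeff_apply, coeff_Psi, psiCoeff]

lemma Psi_mul_C {x y : A} {c : K} (p : K) (m : ℕ) (h : x * y = c ^ m • (y * x)) :
    Psi A p m x * C y = C y * scale c (Psi A p m x) := by
  ext k
  rw [coeff_mul_C, coeff_C_mul, coeff_scale, coeff_Psi]
  split_ifs with hk
  · obtain ⟨n, rfl⟩ := hk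
    rcases m.eq_zero_or_pos with rfl | hm
    · simp
    rw [Nat.mul_div_cancel_left n hm, smul_mul_assoc, pow_mul_eq_smul h, smul_smul,
      smul_smul, mul_smul_comm, ← pow_mul, mul_comm]
  · simp

lemma Psi_eq_mul_scale {p c : K} {m : ℕ} (hm : 0 < m) (hc : c ^ m = p ^ 2)
    (hp : ∀ n, 0 < n → p ^ (2 * n) ≠ 1) (x : A) :
    Psi A p m x = (1 + p • (C x * X ^ m)) * scale c (Psi A p m x) := by
  ext k
  rw [add_mul, one_mul, map_add, smul_mul_assoc, mul_assoc, coeff_smul, coeff_C_mul,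
    coeff_X_pow_mul']
  simp only [coeff_scale, coeff_Psi]
  by_cases hk : m ∣ k
  · obtain ⟨n, rfl⟩ := hk
    rcases n with _ | n
    · simp [hm.ne']
    · have hxn : x * psiCoeff p n • x ^ n = psiCoeff p n • x ^ (n + 1) := by
        rw [mul_smul_comm, ← pow_succ']
      rw [if_pos (Nat.le_mul_of_pos_right m n.succ_pos),
        show m * (n + 1) - m = m * n by rw [Nat.mul_succ, Nat.add_sub_cancel],
        if_pos (dvd_mul_right m n), if_pos (dvd_mul_right m _), Nat.mul_div_cancel_left _ hm,
        Nat.mul_div_cancel_left n hm, mul_smul_comm, hxn, pow_mul, pow_mul, hc,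
        smul_smul, smul_smul, smul_smul, ← add_smul]
      congr 1
      conv_lhs => rw [psiCoeff_succ n (hp _ n.succ_pos)]
      ring
  · have hkm : ¬(m ≤ k ∧ m ∣ k - m) := fun ⟨hle, hdvd⟩ =>
      hk (by simpa [Nat.sub_add_cancel hle] using Nat.dvd_add hdvd (dvd_refl m))
    split_ifs <;> simp_all

lemma Psi_one_eq_mul_scale {p : K} (hp : ∀ n, 0 < n → p ^ (2 * n) ≠ 1) (x : A) :
    Psi A p 1 x = (1 + p • (C x * X)) * scale (p ^ 2) (Psi A p 1 x) := by
  simpa using Psi_eq_mul_scale one_pos (pow_one _) hp x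

lemma coeff_succ_of_eq_mul_scale {p c : K} {x : A} {F : A⟦X⟧}
    (hF : F = (1 + p • (C x * X)) * scale c F) (n : ℕ) :
    (1 - c ^ (n + 1)) • coeff (n + 1) F = p • (x * c ^ n • coeff n F) := by
  conv_lhs => rw [sub_smul, one_smul]; enter [1]; rw [hF]
  rw [add_mul, one_mul, map_add, smul_mul_assoc, mul_assoc, coeff_smul, coeff_C_mul,
    coeff_succ_X_mul, coeff_scale, coeff_scale, add_sub_cancel_left]

lemma eq_of_eq_mul_scale {p : K} (hp : ∀ n, 0 < n → p ^ (2 * n) ≠ 1) {x : A} {F G : A⟦X⟧}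
    (hF : F = (1 + p • (C x * X)) * scale (p ^ 2) F)
    (hG : G = (1 + p • (C x * X)) * scale (p ^ 2) G)
    (h0 : constantCoeff F = constantCoeff G) : F = G := by
  ext n
  induction n with
  | zero => simpa using h0
  | succ n ih =>
    have hunit : (1 : K) - (p ^ 2) ^ (n + 1) ≠ 0 := by
      rw [← pow_mul]; exact sub_ne_zero.mpr (hp _ n.succ_pos).symm
    apply smul_right_injective A hunit
    simp only [coeff_succ_of_eq_mul_scale hF, coeff_succ_of_eq_mul_scale hG, ih]

lemma Psi_mul_Psi_mul_Psi_eq_mul_scale {p : K} (hp : ∀ n, 0 < n → p ^ (2 * n) ≠ 1) {u v : A}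
    (huv : u * v = (p ^ 2) ^ 2 • (v * u)) :
    Psi A p 1 u * Psi A (p ^ 2) 2 ((p ^ 2)⁻¹ • (u * v)) * Psi A p 1 v =
      (1 + p • (C (u + v) * X)) *
        scale (p ^ 2) (Psi A p 1 u * Psi A (p ^ 2) 2 ((p ^ 2)⁻¹ • (u * v)) * Psi A p 1 v) := by
  set t := p ^ 2 with ht
  set w := t⁻¹ • (u * v) with hw
  set S := scale (A := A) t
  have htw : t • (v * u) = w := by
    rw [hw, huv, smul_smul, sq, ← mul_assoc, inv_mul_mul_self]
  have huw : u * w = (t ^ 2) ^ 1 • (w * u) := by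
    rw [pow_one, hw, mul_smul_comm, smul_mul_assoc]
    conv_lhs => rw [huv, mul_smul_comm, smul_comm, ← mul_assoc]
  have hwv : w * v = t ^ 2 • (v * w) := by
    rw [hw, smul_mul_assoc, mul_smul_comm]
    conv_lhs => rw [huv, smul_mul_assoc, mul_assoc, smul_comm]
  have hFu := Psi_one_eq_mul_scale hp u
  have hFv := Psi_one_eq_mul_scale hp v
  have hFw : Psi A t 2 w = (1 + t • (C w * X ^ 2)) * S (Psi A t 2 w) :=
    Psi_eq_mul_scale two_pos rfl (fun n hn => by rw [← pow_mul]; exact hp _ (by omega)) w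
  have hSu : S (Psi A p 1 u) = (1 + (p * t) • (C u * X)) * scale (t ^ 2) (Psi A p 1 u) := by
    conv_lhs => rw [hFu]
    rw [map_mul, map_add, map_one, scale_smul, map_mul, scale_C, scale_X, scale_scale,
      mul_smul_comm, smul_smul, ← sq]
  have hcuv : Psi A p 1 u * C v = C v * scale (t ^ 2) (Psi A p 1 u) :=
    Psi_mul_C p 1 (by rwa [pow_one])
  have hcuw : Psi A p 1 u * C w = C w * scale (t ^ 2) (Psi A p 1 u) := Psi_mul_C p 1 huw
  have hcwv : Psi A t 2 w * C v = C v * S (Psi A t 2 w) := Psi_mul_C t 2 hwv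
  have hvSu : C v * S (Psi A p 1 u) = Psi A p 1 u * (C v + p • (C w * X)) :=
    calc C v * S (Psi A p 1 u)
        = C v * scale (t ^ 2) (Psi A p 1 u)
          + p • (X * (C (t • (v * u)) * scale (t ^ 2) (Psi A p 1 u))) := by
          rw [hSu]
          simp only [add_mul, mul_add, one_mul, smul_mul_assoc, mul_smul_comm, C_smul, map_mul,
            mul_assoc, mul_X_mul, smul_smul]
      _ = Psi A p 1 u * C v + p • (X * (Psi A p 1 u * C w)) := by rw [htw, hcuv, hcuw]
      _ = Psi A p 1 u * (C v + p • (C w * X)) := by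
          rw [mul_add, mul_smul_comm, (commute_X (C w)).eq, mul_X_mul]
  symm
  calc (1 + p • (C (u + v) * X)) * S (Psi A p 1 u * Psi A t 2 w * Psi A p 1 v)
      = (1 + p • (C u * X)) * S (Psi A p 1 u) * S (Psi A t 2 w) * S (Psi A p 1 v)
        + p • (X * ((C v * S (Psi A p 1 u)) * S (Psi A t 2 w) * S (Psi A p 1 v))) := by
        simp only [map_mul, map_add, add_mul, one_mul, smul_mul_assoc, mul_assoc, mul_X_mul,
          smul_add]
        abel
    _ = Psi A p 1 u * ((1 + t • (C w * X ^ 2)) * S (Psi A t 2 w) * S (Psi A p 1 v)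
        + p • (X * ((C v * S (Psi A t 2 w)) * S (Psi A p 1 v)))) := by
        rw [← hFu, hvSu]
        simp only [add_mul, mul_add, one_mul, smul_mul_assoc, mul_smul_comm, mul_assoc,
          mul_X_mul, smul_smul, ht, pow_two, smul_add]
        abel
    _ = Psi A p 1 u * Psi A t 2 w * ((1 + p • (C v * X)) * S (Psi A p 1 v)) := by
        rw [← hFw, ← hcwv]
        simp only [add_mul, mul_add, one_mul, smul_mul_assoc, mul_smul_comm, mul_assoc, mul_X_mul]
    _ = Psi A p 1 u * Psi A t 2 w * Psi A p 1 v := by rw [← hFv]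

end

theorem quantum_exponential_doubly_laced_qsq_commuting_general
    {K : Type*} [Field K] (qs : K) (hqs : ∀ n : ℕ, 1 ≤ n → qs ^ n ≠ 1)
    (q : K) (hq : q = qs ^ 2)
    {A : Type*} [Ring A] [Algebra K A]
    (u v : A) (huv : u * v = (q ^ 2) • (v * u)) :
    Psi A qs 1 (u + v) = Psi A qs 1 u * Psi A q 2 (q⁻¹ • (u * v)) * Psi A qs 1 v := by
  subst hq
  have hp : ∀ n, 0 < n → qs ^ (2 * n) ≠ 1 := fun n hn => hqs _ (by omega)
  refine eq_of_eq_mul_scale hp (Psi_one_eq_mul_scale hp (u + v))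
    (Psi_mul_Psi_mul_Psi_eq_mul_scale hp huv) ?_
  simp only [map_mul, constantCoeff_Psi, mul_one]

/-- doubly-laced quantum exponential relation for q²-commuting
elements: with `q = q_s²`, if `u·v = q²·v·u` then
`Ψ_{q_s}⁽¹⁾(u + v) = Ψ_{q_s}⁽¹⁾(u)·Ψ_q⁽²⁾(q⁻¹·u·v)·Ψ_{q_s}⁽¹⁾(v)` in `A[[T]]`. -/
theorem quantum_exponential_doubly_laced_qsq_commuting
    {K : Type*} [Field K] (qs : K) (hqs0 : qs ≠ 0) (hqs : ∀ n : ℕ, 1 ≤ n → qs ^ n ≠ 1)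
    (q : K) (hq : q = qs ^ 2)
    {A : Type*} [Ring A] [Algebra K A]
    (u v : A) (huv : u * v = (q ^ 2) • (v * u)) :
    Psi A qs 1 (u + v) = Psi A qs 1 u * Psi A q 2 (q⁻¹ • (u * v)) * Psi A qs 1 v :=
  quantum_exponential_doubly_laced_qsq_commuting_general qs hqs q hq u v huv
end

section
/- Quantum dilogarithm conjugation identity (the identity realizing the automorphism part μ# of a quantum cluster mutation): let u, x ∈ A and let m ≥ 1 be an integer. (i) If u·x = q^{2m}·x·u, then Ψ_q^{(1)}(u) · x · Ψ_q^{(1)}(u)⁻¹ = x · ∏_{r=1}^{m}(1 + q^{2r−1}·T·u)⁻¹ in A[[T]]. (ii) If u·x = q^{−2m}·x·u, then Ψ_q^{(1)}(u) · x · Ψ_q^{(1)}(u)⁻¹ = x · ∏_{r=1}^{m}(1 + q^{1−2r}·T·u) in A[[T]]. -/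
open PowerSeries

section

variable {K : Type*} [Field K] {A : Type*} [Ring A] [Algebra K A]

noncomputable def qdilogCoeff (q : K) (n : ℕ) : K :=
  q ^ (n ^ 2) / ∏ k ∈ Finset.Icc 1 n, (1 - q ^ (2 * k))

theorem coeff_Psi_one (q : K) (a : A) (n : ℕ) :
    coeff n (Psi A q 1 a) = qdilogCoeff q n • a ^ n := by
  simp [Psi, qdilogCoeff]

theorem constantCoeff_Psi_one (q : K) (a : A) : constantCoeff (Psi A q 1 a) = 1 := by
  simp [← coeff_zero_eq_constantCoeff_apply, coeff_Psi_one, qdilogCoeff]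

theorem qdilogCoeff_succ_mul {q : K} (hq : ∀ n : ℕ, 1 ≤ n → q ^ n ≠ 1) (n : ℕ) :
    qdilogCoeff q (n + 1) * (1 - q ^ (2 * (n + 1))) = q ^ (2 * n + 1) * qdilogCoeff q n := by
  have hfactor : ∀ k, 1 ≤ k → 1 - q ^ (2 * k) ≠ 0 := fun k hk =>
    sub_ne_zero.mpr (hq _ (by omega)).symm
  unfold qdilogCoeff
  rw [Finset.prod_Icc_succ_top (by omega)]
  field_simp [hfactor (n + 1) (by omega)]
  ring

theorem one_add_smul_X_mul_C_mul_Psi {q : K} (hq : ∀ n : ℕ, 1 ≤ n → q ^ n ≠ 1) (a : A) :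
    (1 + q • (X * C a)) * Psi A q 1 (q ^ 2 • a) = Psi A q 1 a := by
  ext (_ | n)
  · simp [constantCoeff_Psi_one]
  · rw [add_mul, one_mul, smul_mul_assoc, mul_assoc, map_add, coeff_smul, coeff_succ_X_mul,
      coeff_C_mul]
    simp only [coeff_Psi_one, smul_pow, smul_smul, mul_smul_comm, ← pow_succ', ← add_smul]
    congr 1
    linear_combination -qdilogCoeff_succ_mul hq n

theorem pow_mul_eq_pow_smul_mul_pow {s : K} {a x : A} (h : a * x = s • (x * a)) (n : ℕ) :
    a ^ n * x = s ^ n • (x * a ^ n) := by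
  induction n with
  | zero => simp
  | succ n ih =>
    rw [pow_succ', mul_assoc, ih, mul_smul_comm, ← mul_assoc, h, smul_mul_assoc, smul_smul,
      ← pow_succ, mul_assoc, ← pow_succ']

theorem Psi_one_mul_C {q s : K} {a x : A} (h : a * x = s • (x * a)) :
    Psi A q 1 a * C x = C x * Psi A q 1 (s • a) := by
  ext n
  rw [coeff_mul_C, coeff_C_mul, coeff_Psi_one, coeff_Psi_one, smul_mul_assoc,
    pow_mul_eq_pow_smul_mul_pow h, smul_pow, smul_smul, mul_smul_comm, mul_smul_comm, smul_smul]

theorem X_mul_C_smul (c : K) (a : A) : X * C (c • a) = c • (X * C a) := by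
  ext (_ | n) <;> simp

theorem list_prod_mul_Psi_pow_smul {q : K} (hq : ∀ n : ℕ, 1 ≤ n → q ^ n ≠ 1) (a : A) (m : ℕ) :
    ((List.range m).map fun r => (1 : PowerSeries A) + q ^ (2 * r + 1) • (X * C a)).prod *
      Psi A q 1 (q ^ (2 * m) • a) = Psi A q 1 a := by
  induction m with
  | zero => simp
  | succ m ih =>
    have step := one_add_smul_X_mul_C_mul_Psi hq (q ^ (2 * m) • a)
    rw [X_mul_C_smul, smul_smul, smul_smul, ← pow_succ', ← pow_add,
      show 2 + 2 * m = 2 * (m + 1) by ring] at step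
    rw [List.range_succ, List.map_append, List.prod_append, List.map_singleton,
      List.prod_singleton, mul_assoc, step, ih]

theorem commute_one_add_smul (b c : K) (f : PowerSeries A) :
    Commute (1 + b • f) (1 + c • f) :=
  (Commute.one_left _).add_left
    ((Commute.one_right _).add_right (((Commute.refl f).smul_left b).smul_right c))

theorem Psi_inv_pow_smul {q : K} (hq0 : q ≠ 0) (hq : ∀ n : ℕ, 1 ≤ n → q ^ n ≠ 1) (a : A)
    (m : ℕ) :
    Psi A q 1 ((q ^ (2 * m))⁻¹ • a) =
      ((List.range m).map fun r => (1 : PowerSeries A) + (q ^ (2 * r + 1))⁻¹ • (X * C a)).prod *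
        Psi A q 1 a := by
  induction m with
  | zero => simp
  | succ m ih =>
    have hlin : q * (q ^ (2 * (m + 1)))⁻¹ = (q ^ (2 * m + 1))⁻¹ := by field_simp; ring
    have hsq : q ^ 2 * (q ^ (2 * (m + 1)))⁻¹ = (q ^ (2 * m))⁻¹ := by field_simp; ring
    rw [← one_add_smul_X_mul_C_mul_Psi hq, X_mul_C_smul, smul_smul, smul_smul, hlin, hsq, ih,
      List.range_succ, List.map_append, List.prod_append, List.map_singleton,
      List.prod_singleton, ← mul_assoc]
    congr 1
    -- the new factor appears on the left but belongs at the end; all factors are in `K[X * C a]`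
    refine (Commute.list_prod_right _ _ fun f hf => ?_).eq
    obtain ⟨r, -, rfl⟩ := List.mem_map.mp hf
    exact commute_one_add_smul _ _ _

theorem isUnit_list_prod_one_add_smul_X_mul {ι : Type*} (l : List ι) (c : ι → K)
    (f : PowerSeries A) : IsUnit ((l.map fun i => 1 + c i • (X * f)).prod) :=
  List.prod_isUnit fun g hg => by
    obtain ⟨i, -, rfl⟩ := List.mem_map.mp hg
    simp [isUnit_iff_constantCoeff]

theorem isUnit_Psi_one (q : K) (a : A) : IsUnit (Psi A q 1 a) := by
  simp [isUnit_iff_constantCoeff, constantCoeff_Psi_one]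
end

theorem quantum_dilogarithm_conjugation_general
    {K : Type*} [Field K] (q : K) (hq0 : q ≠ 0) (hq : ∀ n : ℕ, 1 ≤ n → q ^ n ≠ 1)
    {A : Type*} [Ring A] [Algebra K A]
    (u x : A) (m : ℕ) :
    (u * x = (q ^ (2 * m)) • (x * u) →
      Psi A q 1 u * PowerSeries.C x * Ring.inverse (Psi A q 1 u)
        = PowerSeries.C x *
            Ring.inverse (((List.range m).map fun r =>
              (1 : PowerSeries A) + (q ^ (2 * r + 1)) • (PowerSeries.X * PowerSeries.C u)).prod)) ∧
    (u * x = ((q ^ (2 * m))⁻¹) • (x * u) →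
      Psi A q 1 u * PowerSeries.C x * Ring.inverse (Psi A q 1 u)
        = PowerSeries.C x *
            ((List.range m).map fun r =>
              (1 : PowerSeries A) + ((q ^ (2 * r + 1))⁻¹) • (PowerSeries.X * PowerSeries.C u)).prod) := by
  have hΨ := isUnit_Psi_one q u
  refine ⟨fun h => ?_, fun h => ?_⟩
  · have hshift := (Ring.inverse_mul_eq_iff_eq_mul _ _ _
      (isUnit_list_prod_one_add_smul_X_mul _ _ _)).mpr
      (list_prod_mul_Psi_pow_smul hq u m).symm
    rw [Psi_one_mul_C h, ← hshift, ← mul_assoc, Ring.mul_inverse_cancel_right _ _ hΨ]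
  · rw [Psi_one_mul_C h, Psi_inv_pow_smul hq0 hq, ← mul_assoc,
      Ring.mul_inverse_cancel_right _ _ hΨ]

/-- quantum dilogarithm conjugation identity, realizing the
automorphism part of a quantum cluster mutation:
(i) if `u·x = q^{2m}·x·u` then `Ψ_q⁽¹⁾(u)·x·Ψ_q⁽¹⁾(u)⁻¹ = x·∏_{r=1}^{m}(1 + q^{2r−1}·T·u)⁻¹`;
(ii) if `u·x = q^{−2m}·x·u` then `Ψ_q⁽¹⁾(u)·x·Ψ_q⁽¹⁾(u)⁻¹ = x·∏_{r=1}^{m}(1 + q^{1−2r}·T·u)`. -/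
theorem quantum_dilogarithm_conjugation
    {K : Type*} [Field K] (q : K) (hq0 : q ≠ 0) (hq : ∀ n : ℕ, 1 ≤ n → q ^ n ≠ 1)
    {A : Type*} [Ring A] [Algebra K A]
    (u x : A) (m : ℕ) (hm : 1 ≤ m) :
    (u * x = (q ^ (2 * m)) • (x * u) →
      Psi A q 1 u * PowerSeries.C x * Ring.inverse (Psi A q 1 u)
        = PowerSeries.C x *
            Ring.inverse (((List.range m).map fun r =>
              (1 : PowerSeries A) + (q ^ (2 * r + 1)) • (PowerSeries.X * PowerSeries.C u)).prod)) ∧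
    (u * x = ((q ^ (2 * m))⁻¹) • (x * u) →
      Psi A q 1 u * PowerSeries.C x * Ring.inverse (Psi A q 1 u)
        = PowerSeries.C x *
            ((List.range m).map fun r =>
              (1 : PowerSeries A) + ((q ^ (2 * r + 1))⁻¹) • (PowerSeries.X * PowerSeries.C u)).prod) :=
  quantum_dilogarithm_conjugation_general q hq0 hq u x m
end
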